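/- If S ⊆ ℝ² is bounded and its topological frontier is contained in the image of a rectifiable curve γ : [0,1] → ℝ², then the inner Jordan content of S equals the outer Jordan content of S (S is Jordan measurable). -/

import Mathlib

open MeasureTheory

/-- The axis-parallel rectangle `[a,b] × [c,d]` in `ℝ²`. -/
def Rect (a b c d : ℝ) : Set (ℝ × ℝ) := Set.Icc a b ×ˢ Set.Icc c d

/-- A set is an axis-parallel rectangle. -/
def IsRect (R : Set (ℝ × ℝ)) : Prop :=
  ∃ a b c d : ℝ, a ≤ b ∧ c ≤ d ∧ R = Rect a b c d

/-- A figure: a union of a finite family of pairwise non-overlapping axis-parallel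
rectangles. -/
def IsFigure (C : Set (ℝ × ℝ)) : Prop :=
  ∃ (n : ℕ) (R : ℕ → Set (ℝ × ℝ)),
    (∀ i < n, IsRect (R i)) ∧
    (∀ i < n, ∀ j < n, i ≠ j → interior (R i) ∩ interior (R j) = ∅) ∧
    C = ⋃ i ∈ Finset.range n, R i

/-- Inner Jordan content: the sup of areas of figures contained in the interior of `S`. -/
noncomputable def innerJordanContent (S : Set (ℝ × ℝ)) : ℝ :=
  sSup {x : ℝ | ∃ A : Set (ℝ × ℝ), IsFigure A ∧ A ⊆ interior S ∧ x = (volume A).toReal}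

/-- Outer Jordan content: the inf of areas of figures containing the closure of `S`. -/
noncomputable def outerJordanContent (S : Set (ℝ × ℝ)) : ℝ :=
  sInf {x : ℝ | ∃ B : Set (ℝ × ℝ), IsFigure B ∧ closure S ⊆ B ∧ x = (volume B).toReal}


section JordanAux
open Set Filter Topology
open scoped NNReal ENNReal


lemma volume_curve_image_zero (γ : ℝ → ℝ × ℝ)
    (hbv : eVariationOn γ (Set.Icc 0 1) < ⊤) :
    volume (γ '' Set.Icc 0 1) = 0 := by
  set s : Set ℝ := Set.Icc 0 1 with hs
  have hB : BoundedVariationOn γ s := hbv.ne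
  have hlbv : LocallyBoundedVariationOn γ s := fun a b _ _ => hB.mono inter_subset_left
  have h0 : (0:ℝ) ∈ s := by simp [hs]
  set p : ℝ → ℝ := fun t => variationOnFromTo γ s 0 t with hp
  have hdist : ∀ a ∈ s, ∀ b ∈ s, dist (γ a) (γ b) ≤ dist (p a) (p b) := by
    have key : ∀ a ∈ s, ∀ b ∈ s, a ≤ b → dist (γ a) (γ b) ≤ dist (p a) (p b) := by
      intro a ha b hb hab
      have h1 : dist (γ a) (γ b) ≤ variationOnFromTo γ s a b := by
        rw [variationOnFromTo.eq_of_le γ s hab, dist_edist]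
        exact ENNReal.toReal_mono (hlbv a b ha hb)
          (eVariationOn.edist_le γ ⟨ha, le_rfl, hab⟩ ⟨hb, hab, le_rfl⟩)
      have h2 : variationOnFromTo γ s a b = p b - p a := by
        rw [hp]; dsimp only
        rw [← variationOnFromTo.add hlbv h0 ha hb]; ring
      rw [h2] at h1
      calc dist (γ a) (γ b) ≤ p b - p a := h1
        _ ≤ |p b - p a| := le_abs_self _
        _ = dist (p a) (p b) := by rw [dist_comm, Real.dist_eq]
    intro a ha b hb
    rcases le_total a b with h | h
    · exact key a ha b hb h
    · rw [dist_comm, dist_comm (p a)]; exact key b hb a ha h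
  set f : ℝ → ℝ × ℝ := fun x => γ (Function.invFunOn p s x) with hf
  have himg : γ '' s ⊆ f '' (p '' s) := by
    rintro - ⟨t, ht, rfl⟩
    refine ⟨p t, ⟨t, ht, rfl⟩, ?_⟩
    have hex : ∃ a ∈ s, p a = p t := ⟨t, ht, rfl⟩
    have h1 : Function.invFunOn p s (p t) ∈ s := Function.invFunOn_mem hex
    have h2 : p (Function.invFunOn p s (p t)) = p t := Function.invFunOn_eq hex
    have h3 := hdist _ h1 t ht
    rw [h2, dist_self] at h3
    have h4 : dist (γ (Function.invFunOn p s (p t))) (γ t) = 0 := le_antisymm h3 dist_nonneg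
    rw [hf]; dsimp only
    exact (dist_eq_zero.mp h4)
  have hlip : LipschitzOnWith 1 f (p '' s) := by
    apply LipschitzOnWith.of_dist_le_mul
    rintro - ⟨a, ha, rfl⟩ - ⟨b, hb, rfl⟩
    have hexa : ∃ x ∈ s, p x = p a := ⟨a, ha, rfl⟩
    have hexb : ∃ x ∈ s, p x = p b := ⟨b, hb, rfl⟩
    have h5 := hdist _ (Function.invFunOn_mem hexa) _ (Function.invFunOn_mem hexb)
    rw [Function.invFunOn_eq hexa, Function.invFunOn_eq hexb] at h5
    simpa [hf] using h5
  have hdim : dimH (γ '' s) ≤ 1 := by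
    calc dimH (γ '' s) ≤ dimH (f '' (p '' s)) := dimH_mono himg
      _ ≤ dimH (p '' s) := hlip.dimH_image_le
      _ ≤ dimH (univ : Set ℝ) := dimH_mono (subset_univ _)
      _ = 1 := Real.dimH_univ
  rw [← hausdorffMeasure_prod_real]
  have hlt : dimH (γ '' s) < ((2:ℝ≥0) : ℝ≥0∞) := by
    refine hdim.trans_lt ?_
    norm_num
  have h2 := hausdorffMeasure_of_dimH_lt (d := 2) hlt
  convert h2 using 2
  norm_num

/-- grid square -/
def gsq (δ : ℝ) (p : ℤ × ℤ) : Set (ℝ × ℝ) :=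
  Set.Icc (p.1 * δ) ((p.1 + 1) * δ) ×ˢ Set.Icc (p.2 * δ) ((p.2 + 1) * δ)

lemma gsq_isRect {δ : ℝ} (hδ : 0 < δ) (p : ℤ × ℤ) : IsRect (gsq δ p) :=
  ⟨p.1 * δ, (p.1 + 1) * δ, p.2 * δ, (p.2 + 1) * δ,
    by nlinarith [hδ], by nlinarith [hδ], rfl⟩

lemma interior_gsq (δ : ℝ) (p : ℤ × ℤ) :
    interior (gsq δ p) = Set.Ioo (p.1 * δ) ((p.1 + 1) * δ) ×ˢ Set.Ioo (p.2 * δ) ((p.2 + 1) * δ) := by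
  rw [gsq, interior_prod_eq, interior_Icc, interior_Icc]

lemma gsq_disjoint {δ : ℝ} (hδ : 0 < δ) {p q : ℤ × ℤ} (hpq : p ≠ q) :
    interior (gsq δ p) ∩ interior (gsq δ q) = ∅ := by
  rw [interior_gsq, interior_gsq]
  by_contra h
  obtain ⟨x, ⟨h1, h2⟩, ⟨h3, h4⟩⟩ := Set.nonempty_iff_ne_empty.2 h
  simp only [Set.mem_Ioo] at h1 h2 h3 h4
  apply hpq
  have e1 : p.1 = q.1 := by
    have a1 : (p.1 : ℝ) < q.1 + 1 := by
      have := h1.1.trans h3.2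
      push_cast at this ⊢
      exact (mul_lt_mul_iff_of_pos_right hδ).mp this
    have a2 : (q.1 : ℝ) < p.1 + 1 := by
      have := h3.1.trans h1.2
      push_cast at this ⊢
      exact (mul_lt_mul_iff_of_pos_right hδ).mp this
    have b1 : p.1 < q.1 + 1 := by exact_mod_cast a1
    have b2 : q.1 < p.1 + 1 := by exact_mod_cast a2
    omega
  have e2 : p.2 = q.2 := by
    have a1 : (p.2 : ℝ) < q.2 + 1 := by
      have := h2.1.trans h4.2
      push_cast at this ⊢
      exact (mul_lt_mul_iff_of_pos_right hδ).mp this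
    have a2 : (q.2 : ℝ) < p.2 + 1 := by
      have := h4.1.trans h2.2
      push_cast at this ⊢
      exact (mul_lt_mul_iff_of_pos_right hδ).mp this
    have b1 : p.2 < q.2 + 1 := by exact_mod_cast a1
    have b2 : q.2 < p.2 + 1 := by exact_mod_cast a2
    omega
  exact Prod.ext e1 e2

lemma isFigure_biUnion_gsq {δ : ℝ} (hδ : 0 < δ) (T : Finset (ℤ × ℤ)) :
    IsFigure (⋃ p ∈ T, gsq δ p) := by
  classical
  set e := T.equivFin.symm with he
  refine ⟨T.card, fun i => if h : i < T.card then gsq δ (e ⟨i, h⟩ : ℤ × ℤ) else ∅, ?_, ?_, ?_⟩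
  · intro i hi
    simp only [dif_pos hi]
    exact gsq_isRect hδ _
  · intro i hi j hj hij
    simp only [dif_pos hi, dif_pos hj]
    apply gsq_disjoint hδ
    intro hcon
    apply hij
    have : e ⟨i, hi⟩ = e ⟨j, hj⟩ := Subtype.ext hcon
    have h2 := e.injective this
    simpa using Fin.mk.injEq i hi j hj ▸ h2
  · ext x
    simp only [Set.mem_iUnion, Finset.mem_range]
    constructor
    · rintro ⟨p, hp, hx⟩
      refine ⟨(T.equivFin ⟨p, hp⟩ : ℕ), (T.equivFin ⟨p, hp⟩).2, ?_⟩
      simp only [dif_pos ((T.equivFin ⟨p, hp⟩).2)]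
      have : e ⟨(T.equivFin ⟨p, hp⟩ : ℕ), (T.equivFin ⟨p, hp⟩).2⟩ = ⟨p, hp⟩ := by
        rw [he]; simp
      rw [this]
      exact hx
    · rintro ⟨i, hi, hx⟩
      simp only [dif_pos hi] at hx
      exact ⟨(e ⟨i, hi⟩ : ℤ × ℤ), (e ⟨i, hi⟩).2, hx⟩

lemma IsFigure.volume_ne_top {C : Set (ℝ × ℝ)} (h : IsFigure C) : volume C ≠ ⊤ := by
  obtain ⟨n, R, hrect, -, rfl⟩ := h
  refine ne_top_of_le_ne_top ?_ (measure_biUnion_finset_le (Finset.range n) R)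
  refine (ENNReal.sum_lt_top.2 fun i hi => ?_).ne
  obtain ⟨a, b, c, d, hab, hcd, hR⟩ := hrect i (Finset.mem_range.mp hi)
  rw [hR]
  exact (isCompact_Icc.prod isCompact_Icc).measure_lt_top

lemma isFigure_empty : IsFigure (∅ : Set (ℝ × ℝ)) :=
  ⟨0, fun _ => ∅, by simp, by simp, by simp⟩

lemma key_approx (S : Set (ℝ × ℝ)) (hS : Bornology.IsBounded S)
    (hK : volume (frontier S) = 0) {ε : ℝ} (hε : 0 < ε) :
    ∃ A B : Set (ℝ × ℝ), IsFigure A ∧ A ⊆ interior S ∧ IsFigure B ∧ closure S ⊆ B ∧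
      (volume B).toReal ≤ (volume A).toReal + ε := by
  classical
  obtain ⟨R, hRS⟩ := hS.closure.subset_closedBall 0
  set R₁ : ℝ := max R 0 with hR₁
  have hR₁0 : 0 ≤ R₁ := le_max_right _ _
  have hRS₁ : closure S ⊆ Metric.closedBall 0 R₁ :=
    hRS.trans (Metric.closedBall_subset_closedBall (le_max_left _ _))
  set K := frontier S with hKdef
  have hKcl : IsClosed K := isClosed_frontier
  have hKsub : K ⊆ closure S := frontier_subset_closure
  have hKcpt : IsCompact K :=
    Metric.isCompact_of_isClosed_isBounded hKcl (hS.closure.subset hKsub)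
  -- find δ
  have ht := tendsto_measure_cthickening_of_isCompact (μ := volume) hKcpt
  rw [hK] at ht
  have hev : ∀ᶠ r in 𝓝 (0:ℝ), volume (Metric.cthickening r K) < ENNReal.ofReal ε :=
    ht.eventually_lt_const (ENNReal.ofReal_pos.mpr hε)
  have hev2 : ∀ᶠ r in 𝓝[>] (0:ℝ), volume (Metric.cthickening r K) < ENNReal.ofReal ε :=
    hev.filter_mono nhdsWithin_le_nhds
  obtain ⟨δ, hvol, hδ⟩ := (hev2.and eventually_mem_nhdsWithin).exists
  rw [Set.mem_Ioi] at hδ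
  -- grid
  set N : ℤ := ⌈R₁ / δ⌉ + 1 with hN
  set T : Finset (ℤ × ℤ) := Finset.Icc (-N) N ×ˢ Finset.Icc (-N) N with hT
  set TB : Finset (ℤ × ℤ) := T.filter (fun p => (gsq δ p ∩ closure S).Nonempty) with hTB
  set TA : Finset (ℤ × ℤ) := TB.filter (fun p => gsq δ p ∩ K = ∅) with hTA
  refine ⟨⋃ p ∈ TA, gsq δ p, ⋃ p ∈ TB, gsq δ p,
    isFigure_biUnion_gsq hδ TA, ?_, isFigure_biUnion_gsq hδ TB, ?_, ?_⟩
  · -- A ⊆ interior S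
    intro x hx
    rw [Set.mem_iUnion₂] at hx
    obtain ⟨p, hp, hxp⟩ := hx
    rw [hTA, Finset.mem_filter] at hp
    obtain ⟨hpB, hpK⟩ := hp
    rw [hTB, Finset.mem_filter] at hpB
    obtain ⟨z, hzg, hzc⟩ := hpB.2
    have hzK : z ∉ K := fun h => by
      rw [Set.eq_empty_iff_forall_notMem] at hpK; exact hpK z ⟨hzg, h⟩
    have hzint : z ∈ interior S := by
      by_contra h
      exact hzK ⟨hzc, h⟩
    have hpre : IsPreconnected (gsq δ p) :=
      ((convex_Icc _ _).prod (convex_Icc _ _)).isPreconnected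
    have hdisj : Disjoint (interior S) (closure S)ᶜ :=
      disjoint_compl_right.mono_left interior_subset_closure
    have hsub : gsq δ p ⊆ interior S ∪ (closure S)ᶜ := by
      intro y hy
      by_cases h1 : y ∈ interior S
      · exact Or.inl h1
      · by_cases h2 : y ∈ closure S
        · exfalso
          rw [Set.eq_empty_iff_forall_notMem] at hpK
          exact hpK y ⟨hy, h2, h1⟩
        · exact Or.inr h2
    exact hpre.subset_left_of_subset_union isOpen_interior
      isClosed_closure.isOpen_compl hdisj hsub ⟨z, hzg, hzint⟩ hxp
  · -- closure S ⊆ B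
    intro x hx
    have hxb := hRS₁ hx
    rw [Metric.mem_closedBall, dist_zero_right, Prod.norm_def] at hxb
    have hx1 : |x.1| ≤ R₁ := by
      rw [← Real.norm_eq_abs]; exact (le_max_left _ _).trans hxb
    have hx2 : |x.2| ≤ R₁ := by
      rw [← Real.norm_eq_abs]; exact (le_max_right _ _).trans hxb
    set i : ℤ := ⌊x.1 / δ⌋ with hi
    set j : ℤ := ⌊x.2 / δ⌋ with hj
    have hmem : x ∈ gsq δ (i, j) := by
      constructor
      · constructor
        · exact (le_div_iff₀ hδ).mp (Int.floor_le _)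
        · have := (div_lt_iff₀ hδ).mp (Int.lt_floor_add_one (x.1 / δ))
          push_cast at this ⊢
          linarith
      · constructor
        · exact (le_div_iff₀ hδ).mp (Int.floor_le _)
        · have := (div_lt_iff₀ hδ).mp (Int.lt_floor_add_one (x.2 / δ))
          push_cast at this ⊢
          linarith
    have hbound : ∀ y : ℝ, |y| ≤ R₁ → -N ≤ ⌊y / δ⌋ ∧ ⌊y / δ⌋ ≤ N := by
      intro y hy
      have h1 : y / δ ≤ R₁ / δ := (div_le_div_iff_of_pos_right hδ).mpr (le_of_abs_le hy)
      have h2 : -(R₁ / δ) ≤ y / δ := by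
        rw [← neg_div]
        exact (div_le_div_iff_of_pos_right hδ).mpr (neg_le_of_abs_le hy)
      constructor
      · have : ((-N : ℤ) : ℝ) < ⌊y / δ⌋ := by
          push_cast
          have hceil := Int.le_ceil (R₁ / δ)
          have hfl := Int.lt_floor_add_one (y / δ)
          push_cast [hN] at *
          linarith
        exact_mod_cast this.le
      · have : ((⌊y / δ⌋ : ℤ) : ℝ) ≤ (N : ℝ) := by
          have hceil := Int.le_ceil (R₁ / δ)
          have hfl := Int.floor_le (y / δ)
          push_cast [hN] at *
          linarith
        exact_mod_cast this
    have hiT : (i, j) ∈ T := by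
      rw [hT, Finset.mem_product, Finset.mem_Icc, Finset.mem_Icc]
      exact ⟨hbound x.1 hx1, hbound x.2 hx2⟩
    have hiTB : (i, j) ∈ TB := by
      rw [hTB, Finset.mem_filter]
      exact ⟨hiT, ⟨x, hmem, hx⟩⟩
    exact Set.mem_biUnion hiTB hmem
  · -- volume estimate
    have hBsub : (⋃ p ∈ TB, gsq δ p) ⊆ (⋃ p ∈ TA, gsq δ p) ∪ Metric.cthickening δ K := by
      intro x hx
      rw [Set.mem_iUnion₂] at hx
      obtain ⟨p, hp, hxp⟩ := hx
      by_cases hc : gsq δ p ∩ K = ∅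
      · exact Or.inl (Set.mem_biUnion (show p ∈ TA from Finset.mem_filter.mpr ⟨hp, hc⟩) hxp)
      · obtain ⟨z, hzg, hzK⟩ := Set.nonempty_iff_ne_empty.mpr hc
        refine Or.inr (Metric.mem_cthickening_of_dist_le x z δ K hzK ?_)
        rw [Prod.dist_eq]
        have d1 : dist x.1 z.1 ≤ δ := by
          rw [Real.dist_eq, abs_sub_le_iff]
          obtain ⟨⟨a1, a2⟩, _⟩ := hxp
          obtain ⟨⟨b1, b2⟩, _⟩ := hzg
          constructor <;> nlinarith
        have d2 : dist x.2 z.2 ≤ δ := by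
          rw [Real.dist_eq, abs_sub_le_iff]
          obtain ⟨_, ⟨a1, a2⟩⟩ := hxp
          obtain ⟨_, ⟨b1, b2⟩⟩ := hzg
          constructor <;> nlinarith
        exact max_le d1 d2
    have hAfin : volume (⋃ p ∈ TA, gsq δ p) ≠ ⊤ := (isFigure_biUnion_gsq hδ TA).volume_ne_top
    have hle : volume (⋃ p ∈ TB, gsq δ p) ≤
        volume (⋃ p ∈ TA, gsq δ p) + ENNReal.ofReal ε := by
      calc volume (⋃ p ∈ TB, gsq δ p)
          ≤ volume ((⋃ p ∈ TA, gsq δ p) ∪ Metric.cthickening δ K) := measure_mono hBsub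
        _ ≤ volume (⋃ p ∈ TA, gsq δ p) + volume (Metric.cthickening δ K) := measure_union_le _ _
        _ ≤ volume (⋃ p ∈ TA, gsq δ p) + ENNReal.ofReal ε := add_le_add_right hvol.le _
    calc (volume (⋃ p ∈ TB, gsq δ p)).toReal
        ≤ (volume (⋃ p ∈ TA, gsq δ p) + ENNReal.ofReal ε).toReal :=
          ENNReal.toReal_mono (by finiteness) hle
      _ = (volume (⋃ p ∈ TA, gsq δ p)).toReal + ε := by
          rw [ENNReal.toReal_add hAfin ENNReal.ofReal_ne_top, ENNReal.toReal_ofReal hε.le]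

end JordanAux

/-- A bounded set in the plane whose frontier is contained in the image of a rectifiable
curve is Jordan measurable. -/
theorem jordan_measurable_of_rectifiable_frontier (S : Set (ℝ × ℝ))
    (hS : Bornology.IsBounded S) (γ : ℝ → ℝ × ℝ)
    (hc : ContinuousOn γ (Set.Icc 0 1))
    (hbv : eVariationOn γ (Set.Icc 0 1) < ⊤)
    (hfr : frontier S ⊆ γ '' Set.Icc 0 1) :
    innerJordanContent S = outerJordanContent S := by
  have hK : volume (frontier S) = 0 :=
    measure_mono_null hfr (volume_curve_image_zero γ hbv)
  set IS := {x : ℝ | ∃ A : Set (ℝ × ℝ), IsFigure A ∧ A ⊆ interior S ∧ x = (volume A).toReal}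
    with hIS
  set OS := {x : ℝ | ∃ B : Set (ℝ × ℝ), IsFigure B ∧ closure S ⊆ B ∧ x = (volume B).toReal}
    with hOS
  have hIS_ne : IS.Nonempty := ⟨0, ∅, isFigure_empty, Set.empty_subset _, by simp⟩
  have hOS_ne : OS.Nonempty := by
    obtain ⟨A, B, figA, hA, figB, hB, -⟩ := key_approx S hS hK one_pos
    exact ⟨(volume B).toReal, B, figB, hB, rfl⟩
  have hle : ∀ a ∈ IS, ∀ b ∈ OS, a ≤ b := by
    rintro a ⟨A, figA, hA, rfl⟩ b ⟨B, figB, hB, rfl⟩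
    refine ENNReal.toReal_mono figB.volume_ne_top (measure_mono fun x hx => ?_)
    exact hB (subset_closure (interior_subset (hA hx)))
  have hbddIS : BddAbove IS := by
    obtain ⟨b0, hb0⟩ := hOS_ne
    exact ⟨b0, fun a ha => hle a ha b0 hb0⟩
  have hbddOS : BddBelow OS := by
    refine ⟨0, ?_⟩
    rintro b ⟨B, -, -, rfl⟩
    exact ENNReal.toReal_nonneg
  have le1 : sSup IS ≤ sInf OS :=
    csSup_le hIS_ne fun a ha => le_csInf hOS_ne fun b hb => hle a ha b hb
  have le2 : sInf OS ≤ sSup IS := by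
    refine le_of_forall_pos_le_add fun ε hε => ?_
    obtain ⟨A, B, figA, hA, figB, hB, hab⟩ := key_approx S hS hK hε
    calc sInf OS ≤ (volume B).toReal := csInf_le hbddOS ⟨B, figB, hB, rfl⟩
      _ ≤ (volume A).toReal + ε := hab
      _ ≤ sSup IS + ε := add_le_add_left (le_csSup hbddIS ⟨A, figA, hA, rfl⟩) ε
  exact le_antisymm le1 le2
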